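/- Fix α ∈ (0,1) and set G(α) = ∫₀^∞ t^α e^{−t} dt. Define, for θ > 0, Λ̂(θ) = (1/G(α)) (∫₀^∞ e^{−θ/w} w^{−(1+α)} dw) / (∫₀^∞ (w/(1+w)) w^{−(1+α)} dw) and Λ̃(θ) = (1/G(α)) (∫₀^1 ∫₀^∞ s^α e^{−((1+θ)−s)/w} w^{−(2+α)} dw ds) / (∫₀^∞ (w/(1+w)) w^{−(1+α)} dw). Then for every θ > 0, Λ̂(θ) − Λ̃(θ) = Λ⁰(θ); that is, the aging limit function Λ = Λ̂ − Λ̃ equals the arcsine distribution function. -/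

import Mathlib

open MeasureTheory Set Real

/-- The distribution function of the generalized arcsine law with parameter `α`. -/
noncomputable def arcsineCDF (α u : ℝ) : ℝ :=
  (Real.sin (Real.pi * α) / Real.pi) *
    ∫ s in Set.Ioo (u / (1 + u)) 1, s ^ (-α) * (1 - s) ^ (α - 1)

/-- `G(α) = ∫₀^∞ t^α e^{-t} dt`. -/
noncomputable def Gfun (α : ℝ) : ℝ := ∫ t in Set.Ioi (0:ℝ), t ^ α * Real.exp (-t)

/-- The function `Λ̂` of the paper. -/
noncomputable def LamHat (α θ : ℝ) : ℝ :=
  (1 / Gfun α) *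
    ((∫ w in Set.Ioi (0:ℝ), Real.exp (-θ / w) * w ^ (-(1 + α))) /
      (∫ w in Set.Ioi (0:ℝ), (w / (1 + w)) * w ^ (-(1 + α))))

/-- The function `Λ̃` of the paper. -/
noncomputable def LamTilde (α θ : ℝ) : ℝ :=
  (1 / Gfun α) *
    ((∫ s in Set.Ioo (0:ℝ) 1, ∫ w in Set.Ioi (0:ℝ),
        s ^ α * Real.exp (-((1 + θ) - s) / w) * w ^ (-(2 + α))) /
      (∫ w in Set.Ioi (0:ℝ), (w / (1 + w)) * w ^ (-(1 + α))))

/-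
Everything reduces to Gamma and Beta integrals. The substitution `t = c / w` gives
`∫₀^∞ e^{-c/w} w^{-(1+r)} dw = c^{-r} Γ(r)`, so `G(α) = Γ(α+1) = α Γ(α)`, `Λ̂(θ)` has numerator
`θ^{-α} Γ(α)`, and the inner `w`-integral of `Λ̃(θ)` is `Γ(α+1) s^α (1+θ-s)^{-(α+1)}`. The
substitution `w = s / (1 - s)` turns the common denominator into `B(1-α, α) = π / sin(πα)`, so
`Λ̂(θ) = (sin(πα)/π) θ^{-α}/α` and `Λ̃(θ) = (sin(πα)/π) ∫₀¹ x^α (1+θ-x)^{-(α+1)} dx`.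
On the other side, `s = 1 - x/(1+θ)` maps `(0,1)` onto `(θ/(1+θ), 1)` and turns `Λ⁰(θ)` into
`(sin(πα)/π) ∫₀¹ x^{α-1} (1+θ-x)^{-α} dx`. The two `x`-integrals add up to `θ^{-α}/α`, because
their integrands are the two terms of the derivative of `x^α (1+θ-x)^{-α} / α`.
-/

lemma Gfun_eq_Gamma_add_one {α : ℝ} (hα : -1 < α) : Gfun α = Gamma (α + 1) := by
  rw [Gfun, Gamma_eq_integral (by linarith), add_sub_cancel_right]
  simp_rw [mul_comm]

lemma integral_exp_neg_div_mul_rpow_Ioi {c r : ℝ} (hc : 0 < c) (hr : 0 < r) :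
    ∫ w in Ioi (0:ℝ), exp (-c / w) * w ^ (-(1 + r)) = c ^ (-r) * Gamma r := by
  rw [← integral_comp_rpow_Ioi _ (by norm_num : (-1:ℝ) ≠ 0)]
  calc _ = ∫ x in Ioi (0:ℝ), x ^ (r - 1) * exp (-(c * x)) := by
        refine setIntegral_congr_fun measurableSet_Ioi fun x (hx : 0 < x) => ?_
        rw [rpow_neg_one, smul_eq_mul, inv_rpow hx.le, rpow_neg hx.le, inv_inv,
          div_inv_eq_mul, neg_mul, abs_neg, abs_one, one_mul, mul_left_comm, ← rpow_add hx]
        ring_nf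
    _ = c ^ (-r) * Gamma r := by
        rw [integral_rpow_mul_exp_neg_mul_Ioi hr hc, one_div, inv_rpow hc.le, rpow_neg hc.le]

lemma integral_rpow_mul_one_sub_rpow {a b : ℝ} (ha : 0 < a) (hb : 0 < b) :
    ∫ s in Ioo (0:ℝ) 1, s ^ (a - 1) * (1 - s) ^ (b - 1) = Gamma a * Gamma b / Gamma (a + b) := by
  have hbeta := Complex.Gamma_mul_Gamma_eq_betaIntegral (s := a) (t := b) (by simpa) (by simpa)
  have hreal : Complex.betaIntegral a b
      = ((∫ s in (0:ℝ)..1, s ^ (a - 1) * (1 - s) ^ (b - 1) : ℝ) : ℂ) := by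
    rw [Complex.betaIntegral, ← intervalIntegral.integral_ofReal]
    refine intervalIntegral.integral_congr fun x hx => ?_
    rw [uIcc_of_le zero_le_one] at hx
    push_cast
    rw [Complex.ofReal_cpow hx.1, Complex.ofReal_cpow (sub_nonneg.2 hx.2)]
    push_cast
    ring
  rw [hreal, ← Complex.ofReal_add] at hbeta
  simp only [Complex.Gamma_ofReal] at hbeta
  norm_cast at hbeta
  rw [hbeta, mul_div_cancel_left₀ _ (Gamma_pos_of_pos (add_pos ha hb)).ne',
    intervalIntegral.integral_of_le zero_le_one, integral_Ioc_eq_integral_Ioo]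

lemma integral_rpow_neg_mul_one_sub_rpow {α : ℝ} (h0 : 0 < α) (h1 : α < 1) :
    ∫ s in Ioo (0:ℝ) 1, s ^ (-α) * (1 - s) ^ (α - 1) = π / sin (π * α) := by
  have h := integral_rpow_mul_one_sub_rpow (sub_pos.2 h1) h0
  rwa [sub_sub_cancel_left, sub_add_cancel, Gamma_one, div_one, mul_comm,
    Gamma_mul_Gamma_one_sub] at h

lemma integral_div_one_add_mul_rpow_Ioi (α : ℝ) :
    ∫ w in Ioi (0:ℝ), w / (1 + w) * w ^ (-(1 + α))
      = ∫ s in Ioo (0:ℝ) 1, s ^ (-α) * (1 - s) ^ (α - 1) := by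
  have himage : (fun s : ℝ => s / (1 - s)) '' Ioo 0 1 = Ioi 0 := by
    ext w
    refine ⟨fun ⟨s, ⟨hs0, hs1⟩, hw⟩ => hw ▸ div_pos hs0 (sub_pos.2 hs1), fun (hw : 0 < w) => ?_⟩
    refine ⟨w / (1 + w), ⟨by positivity, (div_lt_one (by positivity)).2 (by linarith)⟩, ?_⟩
    field_simp
    ring
  have hderiv : ∀ s ∈ Ioo (0:ℝ) 1,
      HasDerivWithinAt (fun s : ℝ => s / (1 - s)) ((1 - s) ^ 2)⁻¹ (Ioo 0 1) s := by
    intro s ⟨_, hs1⟩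
    have h : HasDerivAt (fun s : ℝ => s / (1 - s)) ((1 * (1 - s) - s * -1) / (1 - s) ^ 2) s :=
      (hasDerivAt_id' s).div ((hasDerivAt_id' s).const_sub 1) (sub_pos.2 hs1).ne'
    exact h.hasDerivWithinAt.congr_deriv (by ring)
  have hinj : InjOn (fun s : ℝ => s / (1 - s)) (Ioo 0 1) := by
    intro a ⟨_, ha1⟩ b ⟨_, hb1⟩ h
    have := (sub_pos.2 ha1).ne'
    have := (sub_pos.2 hb1).ne'
    field_simp at h
    linarith
  rw [← himage, integral_image_eq_integral_abs_deriv_smul measurableSet_Ioo hderiv hinj]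
  refine setIntegral_congr_fun measurableSet_Ioo fun s ⟨hs0, hs1⟩ => ?_
  have hs1' : 0 < 1 - s := sub_pos.2 hs1
  have hfrac : s / (1 - s) / (1 + s / (1 - s)) = s := by
    field_simp
    ring
  rw [smul_eq_mul, hfrac, abs_of_pos (by positivity), div_rpow hs0.le hs1'.le,
    ← rpow_natCast, ← rpow_neg hs1'.le, div_eq_mul_inv, ← rpow_neg hs1'.le]
  calc (1 - s) ^ (-((2:ℕ):ℝ)) * (s * (s ^ (-(1 + α)) * (1 - s) ^ (-(-(1 + α)))))
      = (s ^ (1:ℝ) * s ^ (-(1 + α))) * ((1 - s) ^ (-((2:ℕ):ℝ)) * (1 - s) ^ (-(-(1 + α)))) := by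
        rw [rpow_one]; ring
    _ = s ^ (-α) * (1 - s) ^ (α - 1) := by
        rw [← rpow_add hs0, ← rpow_add hs1']
        congr 2 <;> push_cast <;> ring

lemma integral_Ioo_div_one_add_rpow_neg_mul_one_sub_rpow {θ : ℝ} (α : ℝ) (hθ : 0 ≤ θ) :
    ∫ s in Ioo (θ / (1 + θ)) 1, s ^ (-α) * (1 - s) ^ (α - 1)
      = ∫ x in Ioo (0:ℝ) 1, x ^ (α - 1) * (1 + θ - x) ^ (-α) := by
  have hc : 0 < 1 + θ := by linarith
  have hsub := intervalIntegral.integral_comp_sub_div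
    (fun s : ℝ => s ^ (-α) * (1 - s) ^ (α - 1)) (a := 0) (b := 1) hc.ne' 1
  rw [zero_div, sub_zero, show 1 - 1 / (1 + θ) = θ / (1 + θ) by field_simp; ring] at hsub
  rw [← integral_Ioc_eq_integral_Ioo, ← integral_Ioc_eq_integral_Ioo,
    ← intervalIntegral.integral_of_le ((div_le_one hc).2 (by linarith)),
    ← intervalIntegral.integral_of_le zero_le_one, smul_eq_mul,
    ← inv_mul_eq_iff_eq_mul₀ hc.ne'] at *
  rw [← hsub, ← intervalIntegral.integral_const_mul]
  refine intervalIntegral.integral_congr fun x hx => ?_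
  rw [uIcc_of_le zero_le_one] at hx
  have hx' : 0 ≤ 1 + θ - x := by linarith [hx.2]
  rw [show 1 - x / (1 + θ) = (1 + θ - x) / (1 + θ) by field_simp,
    show 1 - (1 + θ - x) / (1 + θ) = x / (1 + θ) by field_simp; ring,
    div_rpow hx' hc.le, div_rpow hx.1 hc.le, rpow_neg hc.le, rpow_sub_one hc.ne']
  field_simp

lemma integral_add_integral_eq_rpow_neg_div {α θ : ℝ} (hα : 0 < α) (hθ : 0 < θ) :
    (∫ x in Ioo (0:ℝ) 1, x ^ (α - 1) * (1 + θ - x) ^ (-α))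
      + (∫ x in Ioo (0:ℝ) 1, x ^ α * (1 + θ - x) ^ (-(α + 1))) = θ ^ (-α) / α := by
  have hne : ∀ x ∈ Icc (0:ℝ) 1, 1 + θ - x ≠ 0 := fun x hx => by linarith [hx.2]
  have hcont : ∀ p : ℝ, ContinuousOn (fun x : ℝ => (1 + θ - x) ^ p) (Icc 0 1) := fun p =>
    (continuousOn_const.sub continuousOn_id).rpow_const fun x hx => Or.inl (hne x hx)
  have hcont_rpow : ContinuousOn (fun x : ℝ => x ^ α) (Icc 0 1) :=
    continuousOn_id.rpow_const fun _ _ => Or.inr hα.le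
  have hderiv : ∀ x ∈ Ioo (0:ℝ) 1, HasDerivAt (fun x : ℝ => x ^ α * (1 + θ - x) ^ (-α) / α)
      (x ^ (α - 1) * (1 + θ - x) ^ (-α) + x ^ α * (1 + θ - x) ^ (-(α + 1))) x := by
    intro x ⟨hx0, hx1⟩
    have h := ((hasDerivAt_rpow_const (p := α) (Or.inl hx0.ne')).mul
      (((hasDerivAt_id' x).const_sub (1 + θ)).rpow_const (p := -α)
        (Or.inl (hne x ⟨hx0.le, hx1.le⟩)))).div_const α
    refine h.congr_deriv ?_
    rw [show -α - 1 = -(α + 1) by ring]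
    field_simp
  have hint1 : IntervalIntegrable (fun x : ℝ => x ^ (α - 1) * (1 + θ - x) ^ (-α)) volume 0 1 :=
    (intervalIntegral.intervalIntegrable_rpow' (by linarith)).mul_continuousOn
      (by rw [uIcc_of_le zero_le_one]; exact hcont _)
  have hint2 : IntervalIntegrable (fun x : ℝ => x ^ α * (1 + θ - x) ^ (-(α + 1))) volume 0 1 :=
    (hcont_rpow.mul (hcont _)).intervalIntegrable_of_Icc zero_le_one
  have hftc := intervalIntegral.integral_eq_sub_of_hasDerivAt_of_le zero_le_one
    ((hcont_rpow.mul (hcont _)).div_const α) hderiv (hint1.add hint2)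
  rw [intervalIntegral.integral_add hint1 hint2, intervalIntegral.integral_of_le zero_le_one,
    intervalIntegral.integral_of_le zero_le_one, integral_Ioc_eq_integral_Ioo,
    integral_Ioc_eq_integral_Ioo] at hftc
  rw [hftc, Pi.mul_apply, Pi.mul_apply, zero_rpow hα.ne', one_rpow, add_sub_cancel_left]
  ring

lemma sin_pi_mul_pos {α : ℝ} (h0 : 0 < α) (h1 : α < 1) : 0 < sin (π * α) :=
  sin_pos_of_pos_of_lt_pi (by positivity) (by nlinarith [pi_pos])

lemma LamHat_eq {α θ : ℝ} (h0 : 0 < α) (h1 : α < 1) (hθ : 0 < θ) :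
    LamHat α θ = sin (π * α) / π * (θ ^ (-α) / α) := by
  have hsin := (sin_pi_mul_pos h0 h1).ne'
  rw [LamHat, Gfun_eq_Gamma_add_one (by linarith), Gamma_add_one h0.ne',
    integral_exp_neg_div_mul_rpow_Ioi hθ h0, integral_div_one_add_mul_rpow_Ioi,
    integral_rpow_neg_mul_one_sub_rpow h0 h1]
  have := (Gamma_pos_of_pos h0).ne'
  field_simp

lemma LamTilde_eq {α θ : ℝ} (h0 : 0 < α) (h1 : α < 1) (hθ : 0 < θ) :
    LamTilde α θ = sin (π * α) / π * ∫ x in Ioo (0:ℝ) 1, x ^ α * (1 + θ - x) ^ (-(α + 1)) := by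
  have hsin := (sin_pi_mul_pos h0 h1).ne'
  have hinner : ∀ s ∈ Ioo (0:ℝ) 1,
      ∫ w in Ioi (0:ℝ), s ^ α * exp (-((1 + θ) - s) / w) * w ^ (-(2 + α))
        = Gamma (α + 1) * (s ^ α * (1 + θ - s) ^ (-(α + 1))) := by
    intro s ⟨_, hs1⟩
    simp_rw [mul_assoc, show -(2 + α) = -(1 + (α + 1)) by ring]
    rw [integral_const_mul, integral_exp_neg_div_mul_rpow_Ioi (by linarith) (by linarith)]
    ring
  rw [LamTilde, setIntegral_congr_fun measurableSet_Ioo hinner, integral_const_mul,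
    Gfun_eq_Gamma_add_one (by linarith), integral_div_one_add_mul_rpow_Ioi,
    integral_rpow_neg_mul_one_sub_rpow h0 h1]
  have := (Gamma_pos_of_pos (by linarith : 0 < α + 1)).ne'
  field_simp

/-- the aging limit function `Λ = Λ̂ − Λ̃` equals the arcsine
distribution function `Λ⁰`. -/
theorem stmt_17 (α : ℝ) (hα : α ∈ Set.Ioo (0:ℝ) 1) :
    ∀ θ : ℝ, 0 < θ → LamHat α θ - LamTilde α θ = arcsineCDF α θ := by
  intro θ hθ
  rw [LamHat_eq hα.1 hα.2 hθ, LamTilde_eq hα.1 hα.2 hθ, arcsineCDF,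
    integral_Ioo_div_one_add_rpow_neg_mul_one_sub_rpow α hθ.le,
    ← integral_add_integral_eq_rpow_neg_div hα.1 hθ]
  ring
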